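/- Let A be a Noetherian integrally closed domain and B a faithfully flat Noetherian A-algebra. Let M be a finitely generated A-module. Then M is reflexive (the natural map M → M^∨∨ into the double dual is an isomorphism) if and only if M ⊗_A B is a reflexive B-module. -/

import Mathlib

open TensorProduct

/-!
For a finitely presented `A`-module `M` and a flat `A`-algebra `B`, taking duals commutes with
base change: `B ⊗ M^∨ ≅ (B ⊗ M)^∨`. Applied twice (a finitely generated module over a Noetherian
ring has a finitely presented dual), this identifies the evaluation map of `B ⊗ M` with the base
change of the evaluation map of `M`, up to an isomorphism of the targets. Faithful flatness then
says that one map is bijective iff the other is.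
-/

namespace Module

variable (A B M : Type*) [CommRing A] [CommRing B] [Algebra A B] [AddCommGroup M] [Module A M]

noncomputable def dualBaseChangeEquiv [Flat A B] [FinitePresentation A M] :
    B ⊗[A] Dual A M ≃ₗ[B] Dual B (B ⊗[A] M) :=
  (FinitePresentation.isBaseChange_map A M A B).equiv ≪≫ₗ
    LinearEquiv.congrRight (AlgebraTensorModule.rid A B B)

@[simp]
lemma dualBaseChangeEquiv_tmul_tmul [Flat A B] [FinitePresentation A M] (b c : B)
    (f : Dual A M) (m : M) :
    dualBaseChangeEquiv A B M (b ⊗ₜ f) (c ⊗ₜ m) = b * c * algebraMap A B (f m) := by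
  simp only [dualBaseChangeEquiv, LinearEquiv.trans_apply, IsBaseChange.equiv_tmul,
    LinearEquiv.congrRight, LinearEquiv.arrowCongr_apply, LinearEquiv.refl_symm,
    LinearEquiv.refl_apply, LinearMap.smul_apply, LinearMap.baseChangeHom_apply,
    LinearMap.baseChange_tmul, map_smul, AlgebraTensorModule.rid_tmul, smul_eq_mul,
    Algebra.smul_def]
  ring

noncomputable def doubleDualBaseChangeEquiv [Flat A B] [FinitePresentation A M]
    [FinitePresentation A (Dual A M)] :
    B ⊗[A] Dual A (Dual A M) ≃ₗ[B] Dual B (Dual B (B ⊗[A] M)) :=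
  dualBaseChangeEquiv A B (Dual A M) ≪≫ₗ Dual.congr (dualBaseChangeEquiv A B M)

lemma doubleDualBaseChangeEquiv_comp_baseChange_eval [Flat A B] [FinitePresentation A M]
    [FinitePresentation A (Dual A M)] :
    (doubleDualBaseChangeEquiv A B M).toLinearMap ∘ₗ (Dual.eval A M).baseChange B =
      Dual.eval B (B ⊗[A] M) := by
  ext m ξ
  obtain ⟨η, rfl⟩ := (dualBaseChangeEquiv A B M).surjective ξ
  induction η with
  | zero => simp
  | tmul c f => simp [doubleDualBaseChangeEquiv, mul_comm]
  | add η η' h h' => simp_all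

lemma bijective_dual_eval_baseChange_iff [FaithfullyFlat A B] [FinitePresentation A M]
    [FinitePresentation A (Dual A M)] :
    Function.Bijective (Dual.eval B (B ⊗[A] M)) ↔ Function.Bijective (Dual.eval A M) := by
  rw [← doubleDualBaseChangeEquiv_comp_baseChange_eval, LinearMap.coe_comp,
    LinearEquiv.coe_coe, EquivLike.comp_bijective, LinearMap.baseChange_eq_ltensor,
    FaithfullyFlat.lTensor_bijective_iff_bijective]

end Module

theorem isReflexive_iff_isReflexive_baseChange_general
    (A B M : Type*) [CommRing A] [IsNoetherianRing A]
    [CommRing B] [Algebra A B] [Module.FaithfullyFlat A B]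
    [AddCommGroup M] [Module A M] [Module.Finite A M] :
    Module.IsReflexive A M ↔ Module.IsReflexive B (B ⊗[A] M) := by
  have := Module.finitePresentation_of_finite A M
  have := Module.finitePresentation_of_finite A (Module.Dual A M)
  have key := Module.bijective_dual_eval_baseChange_iff A B M
  exact ⟨fun ⟨h⟩ ↦ ⟨key.mpr h⟩, fun ⟨h⟩ ↦ ⟨key.mp h⟩⟩

/-- **Reflexivity descends along faithfully flat base change.** Let `A` be a Noetherian
integrally closed domain, `B` a faithfully flat Noetherian `A`-algebra and `M` a finitely
generated `A`-module. Then `M` is reflexive (the natural evaluation map `M → M^∨∨` into the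
double dual is an isomorphism) if and only if `M ⊗_A B` is a reflexive `B`-module. -/
theorem isReflexive_iff_isReflexive_baseChange
    (A B M : Type*) [CommRing A] [IsDomain A] [IsNoetherianRing A] [IsIntegrallyClosed A]
    [CommRing B] [IsNoetherianRing B] [Algebra A B] [Module.FaithfullyFlat A B]
    [AddCommGroup M] [Module A M] [Module.Finite A M] :
    Module.IsReflexive A M ↔ Module.IsReflexive B (B ⊗[A] M) :=
  isReflexive_iff_isReflexive_baseChange_general A B M
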